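/- arXiv:2501.18519 — 3 statements merged into one kernel-verified Lean document; each statement's English description precedes it below -/
import Mathlib

section
/- There are no integers a, b, c, d, a', b', c', d' satisfying simultaneously: 2a² + 2b² + 2ab + c² − cd = 1, and 2a'² + 2b'² + 2a'b' + c'² − c'd' = 1, and −2(2aa' + ab' + a'b + 2bb' + cc') + cd' + dc' = 1. -/
/-! Reducing modulo 2: a vector of norm `-2` has odd `(O)`-coordinate `c` and even `F`-coordinate
`d`, since `c² - c d = c (c - d)` must be odd. The pairing of two such vectors is then
`c d' + d c' ≡ 0 (mod 2)`, so it can never be `1`. -/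

theorem Int.even_of_odd_mul_sub {c d : ℤ} (h : Odd (c * (c - d))) : Even d := by
  obtain ⟨hc, hcd⟩ := Int.odd_mul.mp h
  exact (Int.odd_sub.mp hcd).mp hc

theorem even_of_norm_eq_one {a b c d : ℤ} (h : 2*a^2 + 2*b^2 + 2*a*b + c^2 - c*d = 1) :
    Even d :=
  Int.even_of_odd_mul_sub (c := c) ⟨-(a^2 + b^2 + a*b), by linear_combination h⟩

theorem no_integer_solution :
    ¬ ∃ a b c d a' b' c' d' : ℤ,
      2*a^2 + 2*b^2 + 2*a*b + c^2 - c*d = 1 ∧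
      2*a'^2 + 2*b'^2 + 2*a'*b' + c'^2 - c'*d' = 1 ∧
      -2*(2*a*a' + a*b' + a'*b + 2*b*b' + c*c') + c*d' + d*c' = 1 := by
  rintro ⟨a, b, c, d, a', b', c', d', h, h', hpair⟩
  have heven : Even (c*d' + d*c') :=
    ((even_of_norm_eq_one h').mul_left c).add ((even_of_norm_eq_one h).mul_right c')
  have hodd : Odd (c*d' + d*c') :=
    ⟨2*a*a' + a*b' + a'*b + 2*b*b' + c*c', by linear_combination hpair⟩
  exact Int.not_even_iff_odd.mpr hodd heven
end

section
/- Let M be the 4×4 integer matrix with rows (−4,−2,0,0), (−2,−4,0,0), (0,0,−2,1), (0,0,1,0), and define the bilinear form B(v,w) = vᵀ M w on ℤ⁴. Then there do not exist vectors v, w ∈ ℤ⁴ with B(v,v) = −2, B(w,w) = −2, and B(v,w) = 1. -/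
/-!
Write `v = (a, b, c, d)`. Then `B(v, v) = -4(a² + ab + b²) - 2c(c - d)`, and when `d` is odd
`c(c - d)` is even, so `4 ∣ B(v, v)`. Hence a root (`B(v, v) = -2`) has `d` even, and
`B(v, w) ≡ c d' + d c' (mod 2)` is then even for two roots `v, w`, so it cannot be `1`.
-/

namespace NeronSeveriS₂

open Matrix

def gram : Matrix (Fin 4) (Fin 4) ℤ :=
  !![-4, -2, 0, 0; -2, -4, 0, 0; 0, 0, -2, 1; 0, 0, 1, 0]

def form (v w : Fin 4 → ℤ) : ℤ :=
  v ⬝ᵥ (gram *ᵥ w)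

theorem form_apply (v w : Fin 4 → ℤ) :
    form v w = -4 * v 0 * w 0 - 2 * v 0 * w 1 - 2 * v 1 * w 0 - 4 * v 1 * w 1
      - 2 * v 2 * w 2 + v 2 * w 3 + v 3 * w 2 := by
  simp only [form, dotProduct, mulVec, gram, of_apply, cons_val', cons_val_fin_one,
    Fin.sum_univ_four, cons_val_zero, cons_val_one, cons_val]
  ring

theorem four_dvd_form_self_of_odd {v : Fin 4 → ℤ} (hv : Odd (v 3)) : 4 ∣ form v v := by
  obtain ⟨k, hk⟩ := hv
  obtain ⟨m, hm⟩ := Int.even_mul_pred_self (v 2)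
  refine ⟨-(v 0 ^ 2 + v 0 * v 1 + v 1 ^ 2) + k * v 2 - m, ?_⟩
  rw [form_apply]
  linear_combination (2 * v 2) * hk - 2 * hm

theorem even_of_form_self_eq_neg_two {v : Fin 4 → ℤ} (hv : form v v = -2) : Even (v 3) := by
  by_contra hodd
  have h := four_dvd_form_self_of_odd (Int.not_even_iff_odd.mp hodd)
  rw [hv] at h
  norm_num at h

theorem even_form_of_even {v w : Fin 4 → ℤ} (hv : Even (v 3)) (hw : Even (w 3)) :
    Even (form v w) := by
  obtain ⟨n, hn⟩ := hv
  obtain ⟨n', hn'⟩ := hw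
  refine ⟨-2 * v 0 * w 0 - v 0 * w 1 - v 1 * w 0 - 2 * v 1 * w 1 - v 2 * w 2
    + v 2 * n' + n * w 2, ?_⟩
  rw [form_apply, hn, hn']
  ring

end NeronSeveriS₂

theorem no_A2_embedding :
    let M : Matrix (Fin 4) (Fin 4) ℤ :=
      !![-4, -2, 0, 0; -2, -4, 0, 0; 0, 0, -2, 1; 0, 0, 1, 0]
    let B : (Fin 4 → ℤ) → (Fin 4 → ℤ) → ℤ :=
      fun v w => dotProduct v (M.mulVec w)
    ¬ ∃ v w : Fin 4 → ℤ, B v v = -2 ∧ B w w = -2 ∧ B v w = 1 := by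
  intro M B
  have hB : B = NeronSeveriS₂.form := rfl
  rintro ⟨v, w, hvv, hww, hvw⟩
  rw [hB] at hvv hww hvw
  have h := NeronSeveriS₂.even_form_of_even
    (NeronSeveriS₂.even_of_form_self_eq_neg_two hvv)
    (NeronSeveriS₂.even_of_form_self_eq_neg_two hww)
  rw [hvw] at h
  exact Int.not_even_one h
end

section
/- Let M be the 4×4 integer matrix with rows (−4,−2,0,0), (−2,−4,0,0), (0,0,−2,1), (0,0,1,0), and define the bilinear form B(v,w) = vᵀ M w on ℤ⁴. Then there exist vectors v₁, v₂, v₃ ∈ ℤ⁴ with B(vᵢ,vᵢ) = −2 for i = 1,2,3 and B(vᵢ,vⱼ) = 0 for all i ≠ j. -/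
theorem three_A1_embedding :
    let M : Matrix (Fin 4) (Fin 4) ℤ :=
      !![-4, -2, 0, 0; -2, -4, 0, 0; 0, 0, -2, 1; 0, 0, 1, 0]
    let B : (Fin 4 → ℤ) → (Fin 4 → ℤ) → ℤ :=
      fun v w => dotProduct v (M.mulVec w)
    ∃ v₁ v₂ v₃ : Fin 4 → ℤ,
      B v₁ v₁ = -2 ∧ B v₂ v₂ = -2 ∧ B v₃ v₃ = -2 ∧
      B v₁ v₂ = 0 ∧ B v₂ v₁ = 0 ∧ B v₁ v₃ = 0 ∧
      B v₃ v₁ = 0 ∧ B v₂ v₃ = 0 ∧ B v₃ v₂ = 0 := by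
  -- In the basis D_P, D_Q, (O), F: the zero section (O) and the sections
  -- (P) = D_P + (O) + 2F and (Q) = D_Q + (O) + 2F.
  exact ⟨![0, 0, 1, 0], ![1, 0, 1, 2], ![0, 1, 1, 2], by decide⟩
end
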